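/- arXiv:0704.1100 — 4 statements merged into one kernel-verified Lean document; each statement's English description precedes it below -/
import Mathlib

section
/- Let n ≥ 1 and r ≥ 0. In the group algebra ℂS_n of the symmetric group on {1,…,n}, let T X_n^r denote the sum, over all r-tuples (i_1,…,i_r) ∈ {1,…,n−1}^r such that the subgroup of S_n generated by the transpositions (i_1 n),…,(i_r n) acts transitively on {1,…,n}, of the product (i_1 n)(i_2 n)⋯(i_r n). Then T X_n^r lies in the centre Z(n) of ℂS_n, i.e., it commutes with every element of ℂS_n. -/
open scoped Classical

/-- The cycle type of a permutation including fixed points (cycles of length 1). -/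
def fullCycleType {n : ℕ} (σ : Equiv.Perm (Fin n)) : Multiset ℕ :=
  σ.cycleType + Multiset.replicate (n - σ.support.card) 1

/-- The number of ordered factorizations of `σ` into `r` star transpositions with
pivot `p` whose factors generate a subgroup acting transitively on `Fin n`. -/
noncomputable def starFact (n r : ℕ) (p : Fin n) (σ : Equiv.Perm (Fin n)) : ℕ :=
  Nat.card {τ : Fin r → Equiv.Perm (Fin n) //
    (∀ t, ∃ a : Fin n, a ≠ p ∧ τ t = Equiv.swap p a) ∧
    (List.ofFn τ).prod = σ ∧
    ∀ x y : Fin n, ∃ g ∈ Subgroup.closure (Set.range τ), g x = y}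

/-- The series `ξ(x) = 2 x⁻¹ sinh(x/2) = Σ_{k≥0} x^{2k}/(4^k (2k+1)!)`. -/
noncomputable def xiSeries : PowerSeries ℚ :=
  PowerSeries.mk fun k => if Even k then ((4 : ℚ) ^ (k / 2) * (k + 1).factorial)⁻¹ else 0

/-- Logarithm of a formal power series with constant term `1`. -/
noncomputable def psLog (f : PowerSeries ℚ) : PowerSeries ℚ :=
  PowerSeries.mk fun m => ∑ k ∈ Finset.range (m + 1),
    ((-1 : ℚ) ^ (k + 1) / (k : ℚ)) * PowerSeries.coeff m ((f - 1) ^ k)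

/-- `ξ_{2j}`, the coefficient of `x^{2j}` in `log ξ(x)`. -/
noncomputable def xiCoeff (j : ℕ) : ℚ := PowerSeries.coeff (2 * j) (psLog xiSeries)

/-- `|Aut β| = ∏_j f_j!` where `f_j` is the number of parts of `β` equal to `j`. -/
def autCard (β : Multiset ℕ) : ℕ := β.toFinset.prod fun j => (β.count j).factorial

/-- The power sum `p_i(α)`. -/
def pPow (i : ℕ) (α : Multiset ℕ) : ℚ := (α.map fun a => (a : ℚ) ^ i).sum

/-- `q_i(α) := p_i(α) + p_1(α) - 2`. -/
def qPow (i : ℕ) (α : Multiset ℕ) : ℚ := pPow i α + pPow 1 α - 2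

/-- `q̂_i(α) := p_i(α) - 1`. -/
def qhatPow (i : ℕ) (α : Multiset ℕ) : ℚ := pPow i α - 1

/-- `Q_g(α) := Σ_{β ⊢ g} ξ_{2β} q_{2β}(α) / |Aut β|` (equal to `1` for `g = 0`). -/
noncomputable def Qser (g : ℕ) (α : Multiset ℕ) : ℚ :=
  ∑ β : Nat.Partition g,
    (β.parts.map fun b => xiCoeff b * qPow (2 * b) α).prod / (autCard β.parts : ℚ)

/-- `Q̂_g(α) := Σ_{β ⊢ g} ξ_{2β} q̂_{2β}(α) / |Aut β|` (equal to `1` for `g = 0`). -/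
noncomputable def Qhatser (g : ℕ) (α : Multiset ℕ) : ℚ :=
  ∑ β : Nat.Partition g,
    (β.parts.map fun b => xiCoeff b * qhatPow (2 * b) α).prod / (autCard β.parts : ℚ)

/-- The star factorization number `a_g(α)`, for `α` a partition of `n = α.sum` with
`m = α.card` parts: `a_g(α) = ((n+m-2+2g)!/n!) α_1⋯α_m Q_g(α)`. -/
noncomputable def aStar (g : ℕ) (α : Multiset ℕ) : ℚ :=
  ((α.sum + Multiset.card α - 2 + 2 * g).factorial : ℚ) / (α.sum.factorial : ℚ)
    * (α.map fun a => (a : ℚ)).prod * Qser g α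

/-- The scaled double Hurwitz number `b_g(α)`, for `α` a partition of `n = α.sum` with
`m = α.card` parts: `b_g(α) = (m-1+2g)! n^{m-2+2g} α_1⋯α_m Q̂_g(α)`. -/
noncomputable def bHur (g : ℕ) (α : Multiset ℕ) : ℚ :=
  ((Multiset.card α - 1 + 2 * g).factorial : ℚ)
    * (α.sum : ℚ) ^ ((Multiset.card α : ℤ) - 2 + 2 * g)
    * (α.map fun a => (a : ℚ)).prod * Qhatser g α

/-- The transitive power `T Xₙʳ` of the Young–Jucys–Murphy element with pivot `p`. -/
noncomputable def transitivePower (n r : ℕ) (p : Fin n) :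
    MonoidAlgebra ℂ (Equiv.Perm (Fin n)) :=
  ∑ v : Fin r → {j : Fin n // j ≠ p},
    if ∀ x y : Fin n, ∃ g ∈ Subgroup.closure
        (Set.range fun t => Equiv.swap ((v t : Fin n)) p), g x = y then
      MonoidAlgebra.of ℂ (Equiv.Perm (Fin n))
        ((List.ofFn fun t => Equiv.swap ((v t : Fin n)) p).prod)
    else 0

/-- The class sum `K_α ∈ ℂSₙ` of all permutations of full cycle type `α`. -/
noncomputable def classSum (n : ℕ) (α : Multiset ℕ) : MonoidAlgebra ℂ (Equiv.Perm (Fin n)) :=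
  ∑ σ : Equiv.Perm (Fin n),
    if fullCycleType σ = α then MonoidAlgebra.of ℂ (Equiv.Perm (Fin n)) σ else 0

/-!
Inclusion–exclusion over the letters that a factorization avoids writes the transitive power with
pivot `p` as an alternating sum of powers `X_S ^ r` of the partial Jucys–Murphy elements
`X_S = ∑_{a ∈ S} (a p)`. Pairing `S` with `S ∪ {q}` turns it into an alternating sum of the
differences `(X_S + (q p)) ^ r - X_S ^ r`, each of which commutes with `s = (q p)`: for an involution
`s` such that `y = s x s` commutes with `x + s`, an induction on `r` gives
`(x + s) ^ r - x ^ r = (y + s) ^ r - y ^ r`, and here `y = ∑_{a ∈ S} (a q)` commutes with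
`X_S + (q p)` because conjugation by each `(a q)` only permutes the summands of `X_S + (q p)`.
So the transitive power does not depend on its pivot, and since conjugation by `g` moves the pivot
from `p` to `g p`, it is central.
-/

open Finset Equiv

section NoncommRing

variable {R : Type*} [Ring R]

theorem add_pow_sub_pow_eq_of_semiconjBy {x y s : R} (hsx : SemiconjBy s x y)
    (hxs : x * s = s * y) (hy : Commute (x + s) y) (r : ℕ) :
    (x + s) ^ r - x ^ r = (y + s) ^ r - y ^ r := by
  have hyx : SemiconjBy (y - x) (y + s) y := by
    rw [SemiconjBy, ← sub_eq_zero,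
      show (y - x) * (y + s) - y * (y - x) = (y * (x + s) - (x + s) * y) + (s * y - x * s) by
        noncomm_ring, hy.eq, hxs, sub_self, sub_self, add_zero]
  induction r with
  | zero => simp
  | succ r ih =>
    calc (x + s) ^ (r + 1) - x ^ (r + 1) = (x + s) * ((x + s) ^ r - x ^ r) + y ^ r * s := by
          rw [pow_succ', pow_succ', ← (hsx.pow_right r).eq]; noncomm_ring
      _ = (x + s) * ((y + s) ^ r - y ^ r) + y ^ r * s := by rw [ih]
      _ = (y + s) ^ (r + 1) - y ^ (r + 1) := by
          rw [← sub_eq_zero, pow_succ' (y + s), pow_succ y,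
            show (x + s) * ((y + s) ^ r - y ^ r) + y ^ r * s - ((y + s) * (y + s) ^ r - y ^ r * y)
              = y ^ r * (y - x) - (y - x) * (y + s) ^ r + (y ^ r * (x + s) - (x + s) * y ^ r) by
                noncomm_ring, (hyx.pow_right r).eq, (hy.pow_right r).eq, sub_self, sub_self,
            add_zero]

theorem commute_add_pow_sub_pow_of_mul_self {x s : R} (hs : s * s = 1)
    (h : Commute (x + s) (s * x * s)) (r : ℕ) : Commute s ((x + s) ^ r - x ^ r) := by
  have hsx : SemiconjBy s x (s * x * s) := by
    rw [SemiconjBy, mul_assoc _ s, hs, mul_one]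
  have hxs : x * s = s * (s * x * s) := by
    rw [← mul_assoc, ← mul_assoc, hs, one_mul]
  have hconj := ((hsx.add_right (Commute.refl s)).pow_right r).sub_right (hsx.pow_right r)
  rwa [← add_pow_sub_pow_eq_of_semiconjBy hsx hxs h] at hconj

end NoncommRing

theorem sum_pow_eq_sum_listProd_ofFn {R κ : Type*} [Semiring R] [Fintype κ] (c : κ → R)
    (r : ℕ) : (∑ a, c a) ^ r = ∑ v : Fin r → κ, (List.ofFn (c ∘ v)).prod := by
  induction r with
  | zero => simp
  | succ r ih =>
    rw [pow_succ', ih, Finset.sum_mul_sum, ← Fintype.sum_prod_type',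
      ← (Fin.consEquiv fun _ => κ).sum_comp]
    simp [List.ofFn_succ, Function.comp_def]

theorem sum_pow_eq_sum_listProd_ofFn_of_forall_mem {R κ : Type*} [Semiring R] [Fintype κ]
    [DecidableEq κ] (c : κ → R) (S : Finset κ) (r : ℕ) :
    (∑ a ∈ S, c a) ^ r = ∑ v : Fin r → κ with ∀ i, v i ∈ S, (List.ofFn (c ∘ v)).prod := by
  have hS : ∑ a ∈ S, c a = ∑ a, if a ∈ S then c a else 0 := by simp [Finset.sum_ite_mem]
  rw [hS, sum_pow_eq_sum_listProd_ofFn, Finset.sum_filter]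
  refine sum_congr rfl fun v _ => ?_
  split_ifs with hv
  · simp [Function.comp_def, hv]
  · push Not at hv
    obtain ⟨i, hi⟩ := hv
    exact List.prod_eq_zero (List.mem_ofFn.2 ⟨i, by simp [hi]⟩)

theorem inclusion_exclusion_sum_surjective {ι κ M : Type*} [Fintype ι] [DecidableEq ι]
    [Fintype κ] [DecidableEq κ] [AddCommGroup M] (f : (ι → κ) → M) :
    ∑ v : ι → κ with Function.Surjective v, f v
      = ∑ t : Finset κ, (-1 : ℤ) ^ #t • ∑ v : ι → κ with ∀ i, v i ∉ t, f v := by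
  have hIE := inclusion_exclusion_sum_inf_compl univ
    (fun k => ({v | ∀ i, v i ≠ k} : Finset (ι → κ))) f
  convert hIE using 3 with v t
  · ext v
    rw [Finset.mem_filter, Finset.mem_inf]
    simp [Function.Surjective]
  · simp
  · congr 1
    ext v
    simp only [mem_filter, mem_univ, true_and, ne_eq, mem_inf]
    exact ⟨fun h k hk i hi => h i (hi ▸ hk), fun h i hi => h _ hi i rfl⟩

theorem forall_exists_mem_closure_range_swap_iff {α ι : Type*} [DecidableEq α] {p : α}
    (v : ι → {j // j ≠ p}) :
    (∀ x y : α, ∃ g ∈ Subgroup.closure (Set.range fun t => swap (v t : α) p), g x = y) ↔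
      Function.Surjective v := by
  constructor
  · intro h j
    obtain ⟨g, hg, hgj⟩ := h p j
    by_contra hj
    have hfix : g ∈ fixingSubgroup (Perm α) (insert p (Set.range (Subtype.val ∘ v)))ᶜ := by
      refine (Subgroup.closure_le _).2 ?_ hg
      rintro _ ⟨t, rfl⟩
      rw [SetLike.mem_coe, mem_fixingSubgroup_iff]
      intro x hx
      simp only [Set.mem_compl_iff, Set.mem_insert_iff, Set.mem_range, Function.comp_apply,
        not_or] at hx
      exact swap_apply_of_ne_of_ne (fun h => hx.2 ⟨t, h.symm⟩) hx.1
    have hgj' : g j = j := (mem_fixingSubgroup_iff _).1 hfix j (by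
      simp only [Set.mem_compl_iff, Set.mem_insert_iff, Set.mem_range, Function.comp_apply, not_or]
      exact ⟨j.2, fun ⟨t, ht⟩ => hj ⟨t, Subtype.ext ht⟩⟩)
    exact j.2 (g.injective (hgj'.trans hgj.symm))
  · intro hv x y
    have hswap : ∀ z, swap z p ∈ Subgroup.closure (Set.range fun t => swap (v t : α) p) := by
      intro z
      by_cases hz : z = p
      · rw [hz, swap_self]
        exact one_mem _
      · obtain ⟨t, ht⟩ := hv ⟨z, hz⟩
        exact Subgroup.subset_closure ⟨t, by simp [ht]⟩
    exact ⟨swap y p * swap x p, mul_mem (hswap y) (hswap x), by simp⟩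

theorem commute_of_sum_of_swap {k α : Type*} [Semiring k] [DecidableEq α] {p : α}
    {B : Finset α} {g : Perm α} (hgp : g p = p) (hgB : {x | g x ≠ x} ⊆ B) :
    Commute (MonoidAlgebra.of k _ g) (∑ b ∈ B, MonoidAlgebra.of k _ (swap b p)) := by
  have hconj : ∀ b, g * swap b p = swap (g b) p * g := fun b => by
    rw [← hgp, swap_apply_apply, hgp, inv_mul_cancel_right]
  simp only [Commute, SemiconjBy, Finset.mul_sum, Finset.sum_mul, ← map_mul, hconj]
  exact g.sum_comp B (fun b => MonoidAlgebra.of k _ (swap b p * g)) hgB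

theorem commute_sum_of_swap_add_of_swap_conj {k α : Type*} [Semiring k] [DecidableEq α]
    {p q : α} {B : Finset α} (hpB : p ∉ B) (hqB : q ∉ B) (hqp : q ≠ p) :
    Commute (∑ b ∈ B, MonoidAlgebra.of k _ (swap b p) + MonoidAlgebra.of k _ (swap q p))
      (MonoidAlgebra.of k _ (swap q p) * (∑ b ∈ B, MonoidAlgebra.of k _ (swap b p)) *
        MonoidAlgebra.of k _ (swap q p)) := by
  have hconj : MonoidAlgebra.of k _ (swap q p) * (∑ b ∈ B, MonoidAlgebra.of k _ (swap b p)) *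
      MonoidAlgebra.of k _ (swap q p) = ∑ b ∈ B, MonoidAlgebra.of k _ (swap b q) := by
    rw [Finset.mul_sum, Finset.sum_mul]
    refine sum_congr rfl fun b hb => ?_
    have hbq : b ≠ q := fun h => hqB (h ▸ hb)
    have hbp : b ≠ p := fun h => hpB (h ▸ hb)
    have hswap := swap_apply_apply (swap q p) b p
    rw [swap_apply_right, swap_apply_of_ne_of_ne hbq hbp, swap_inv] at hswap
    rw [← map_mul, ← map_mul, ← hswap]
  rw [hconj, add_comm, ← sum_insert (f := fun b => MonoidAlgebra.of k _ (swap b p)) hqB]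
  refine Commute.sum_right _ _ _ fun a ha => (commute_of_sum_of_swap ?_ fun x hx => ?_).symm
  · exact swap_apply_of_ne_of_ne (fun h => hpB (h ▸ ha)) hqp.symm
  · by_contra hxB
    exact hx (swap_apply_of_ne_of_ne (fun h => hxB (h ▸ mem_insert_of_mem ha))
      (fun h => hxB (h ▸ mem_insert_self q B)))

section TransitivePower

variable {n : ℕ}

theorem transitivePower_eq_sum_surjective (r : ℕ) (p : Fin n) :
    transitivePower n r p = ∑ v : Fin r → {j // j ≠ p} with Function.Surjective v,
      MonoidAlgebra.of ℂ _ (List.ofFn fun t => swap (v t : Fin n) p).prod := by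
  rw [transitivePower, Finset.sum_filter]
  simp only [forall_exists_mem_closure_range_swap_iff]

theorem transitivePower_eq_alternating_sum_pow (r : ℕ) (p : Fin n) :
    transitivePower n r p = ∑ t : Finset {j // j ≠ p}, (-1 : ℤ) ^ #t •
      (∑ a ∈ tᶜ, MonoidAlgebra.of ℂ _ (swap (a : Fin n) p)) ^ r := by
  rw [transitivePower_eq_sum_surjective, inclusion_exclusion_sum_surjective]
  refine sum_congr rfl fun t _ => ?_
  simp only [sum_pow_eq_sum_listProd_ofFn_of_forall_mem, mem_compl, map_list_prod, List.map_ofFn,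
    Function.comp_def]
  congr

theorem of_mul_transitivePower_mul_of_inv (r : ℕ) (p : Fin n) (g : Perm (Fin n)) :
    MonoidAlgebra.of ℂ _ g * transitivePower n r p * MonoidAlgebra.of ℂ _ g⁻¹ =
      transitivePower n r (g p) := by
  let e : {j // j ≠ p} ≃ {j // j ≠ g p} := g.subtypeEquiv fun j => g.injective.ne_iff.symm
  rw [transitivePower_eq_sum_surjective, transitivePower_eq_sum_surjective, Finset.mul_sum,
    Finset.sum_mul]
  refine Finset.sum_equiv (Equiv.piCongrRight fun _ => e) (fun v => ?_) (fun v _ => ?_)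
  · simp only [mem_filter, mem_univ, true_and]
    exact (e.comp_surjective v).symm
  · rw [← map_mul, ← map_mul, ← MulAut.conj_apply, map_list_prod, List.map_ofFn]
    congr 2
    ext1 t
    simp [e, swap_apply_apply]

theorem commute_of_swap_transitivePower (r : ℕ) {p q : Fin n} (hqp : q ≠ p) :
    Commute (MonoidAlgebra.of ℂ _ (swap q p)) (transitivePower n r p) := by
  set e := MonoidAlgebra.of ℂ _ (swap q p)
  set q' : {j // j ≠ p} := ⟨q, hqp⟩
  let X : Finset {j // j ≠ p} → MonoidAlgebra ℂ (Perm (Fin n)) := fun S =>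
    ∑ a ∈ S, MonoidAlgebra.of ℂ _ (swap (a : Fin n) p)
  have hpair : transitivePower n r p = ∑ t ∈ (univ.erase q').powerset,
      (-1 : ℤ) ^ #t • ((X (insert q' t)ᶜ + e) ^ r - X (insert q' t)ᶜ ^ r) := by
    have hsplit := sum_powerset_insert (notMem_erase q' univ)
      fun t => (-1 : ℤ) ^ #t • X tᶜ ^ r
    rw [insert_erase (mem_univ q'), powerset_univ] at hsplit
    rw [transitivePower_eq_alternating_sum_pow, hsplit, ← sum_add_distrib]
    refine sum_congr rfl fun t ht => ?_
    have hq't : q' ∉ t := fun h => notMem_erase q' univ (mem_powerset.1 ht h)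
    have hX : X tᶜ = X (insert q' t)ᶜ + e := by
      rw [compl_insert]
      exact (sum_erase_add _ _ (mem_compl.2 hq't)).symm
    rw [card_insert_of_notMem hq't, pow_succ, mul_neg_one, neg_smul, ← sub_eq_add_neg,
      ← smul_sub, hX]
  rw [hpair]
  refine Commute.sum_right _ _ _ fun t _ => Commute.smul_right ?_ _
  refine commute_add_pow_sub_pow_of_mul_self ?_ ?_ r
  · rw [← map_mul, swap_mul_self, map_one]
  · have hX : X (insert q' t)ᶜ = ∑ b ∈ (insert q' t)ᶜ.map (Function.Embedding.subtype _),
        MonoidAlgebra.of ℂ _ (swap b p) := by rw [sum_map]; rfl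
    rw [hX]
    exact commute_sum_of_swap_add_of_swap_conj (by simp) (by simp [q']) hqp

theorem transitivePower_congr_pivot (r : ℕ) (p q : Fin n) :
    transitivePower n r q = transitivePower n r p := by
  rcases eq_or_ne q p with rfl | hqp
  · rfl
  rw [← swap_apply_right q p, ← of_mul_transitivePower_mul_of_inv,
    (commute_of_swap_transitivePower r hqp).eq, mul_assoc, ← map_mul, mul_inv_cancel, map_one,
    mul_one]

theorem commute_transitivePower (r : ℕ) (p : Fin n) (y : MonoidAlgebra ℂ (Perm (Fin n))) :
    Commute (transitivePower n r p) y := by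
  induction y using MonoidAlgebra.induction_on with
  | of g =>
    have hconj := of_mul_transitivePower_mul_of_inv r p g
    rw [transitivePower_congr_pivot r p (g p)] at hconj
    calc transitivePower n r p * MonoidAlgebra.of ℂ _ g
        = MonoidAlgebra.of ℂ _ g * transitivePower n r p * MonoidAlgebra.of ℂ _ g⁻¹ *
            MonoidAlgebra.of ℂ _ g := by rw [hconj]
      _ = MonoidAlgebra.of ℂ _ g * transitivePower n r p := by
        rw [mul_assoc _ (MonoidAlgebra.of ℂ _ g⁻¹), ← map_mul, inv_mul_cancel, map_one, mul_one]
  | add x y hx hy => exact hx.add_right hy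
  | smul c x hx => exact hx.smul_right c

end TransitivePower

/-- the transitive power `T Xₙʳ` lies in the centre of `ℂSₙ`. -/
theorem transitivePower_central (n : ℕ) (hn : 1 ≤ n) (r : ℕ) :
    ∀ y : MonoidAlgebra ℂ (Equiv.Perm (Fin n)),
      transitivePower n r ⟨n - 1, by omega⟩ * y =
        y * transitivePower n r ⟨n - 1, by omega⟩ := by
  intro y
  exact (commute_transitivePower r _ y).eq
end

section
/- Let α be a partition of n with m parts and let σ ∈ K_α. If σ admits a transitive ordered factorization into r star transpositions with pivot n, then r = n+m−2+2g for some integer g ≥ 0; equivalently, r ≥ n+m−2 and r−(n+m−2) is even. -/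
open scoped Classical

/-!
Count the cycles of a permutation, fixed points included, as the dimension of the space of
functions `α → ℚ` constant on its cycles. Multiplying by a transposition raises this count by at
most one, and multiplying by `(p b)` with `b` a fixed point lowers it by one. Along a product of
star transpositions with pivot `p`, a letter `b` that occurs for the first time is still fixed, so
`m + 2 d ≤ r + n`, where `d` is the number of distinct letters. Transitivity forces `d ≥ n - 1`,
whence `r ≥ n + m - 2`; the parity of `r - (n + m)` is read off the sign of `σ`.
-/

open Function in
theorem linearIndependent_indicator_one {ι α K : Type*} [Ring K] {s : ι → Set α}
    (hdisj : Pairwise (Disjoint on s)) (hne : ∀ i, (s i).Nonempty) :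
    LinearIndependent K fun i => (s i).indicator (1 : α → K) := by
  rw [linearIndependent_iff']
  intro t c hc i hi
  obtain ⟨x, hx⟩ := hne i
  have hcx := congrFun hc x
  simp only [Finset.sum_apply, Pi.smul_apply, smul_eq_mul, Pi.zero_apply] at hcx
  rwa [Finset.sum_eq_single i
      (fun j _ hji => by
        rw [Set.indicator_of_notMem ((hdisj hji).notMem_of_mem_right hx), mul_zero])
      (absurd hi), Set.indicator_of_mem hx, Pi.one_apply, mul_one] at hcx

namespace Equiv.Perm

open Module

section FixedFunctions

variable {α : Type*}

def fixedFunctions (σ : Perm α) : Submodule ℚ (α → ℚ) where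
  carrier := {v | ∀ x, v (σ x) = v x}
  add_mem' hv hw x := by simp [hv x, hw x]
  zero_mem' _ := rfl
  smul_mem' c v hv x := by simp [hv x]

theorem mem_fixedFunctions {σ : Perm α} {v : α → ℚ} :
    v ∈ σ.fixedFunctions ↔ ∀ x, v (σ x) = v x := Iff.rfl

noncomputable def numCycles (σ : Perm α) : ℕ := finrank ℚ σ.fixedFunctions

theorem fixedFunctions_one : (1 : Perm α).fixedFunctions = ⊤ := by
  ext v; simp [mem_fixedFunctions]

theorem fixedFunctions_inf_le_mul (σ τ : Perm α) :
    σ.fixedFunctions ⊓ τ.fixedFunctions ≤ (σ * τ).fixedFunctions := by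
  rintro v ⟨hσ, hτ⟩ x
  rw [mul_apply, hσ, hτ]

theorem indicator_one_mem_fixedFunctions {σ : Perm α} {s : Set α} (hs : ∀ x, σ x ∈ s ↔ x ∈ s) :
    s.indicator 1 ∈ σ.fixedFunctions := by
  intro x
  simp only [Set.indicator_apply, hs x, Pi.one_apply]

theorem prod_map_swap_apply_of_notMem [DecidableEq α] (p : α) {L : List α} {x : α} (hxp : x ≠ p)
    (hxL : x ∉ L) : (L.map (swap p)).prod x = x := by
  have hmem : (L.map (swap p)).prod ∈ MulAction.stabilizer (Perm α) x := by
    refine list_prod_mem fun g hg => ?_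
    obtain ⟨b, hb, rfl⟩ := List.mem_map.mp hg
    exact swap_apply_of_ne_of_ne hxp (ne_of_mem_of_not_mem hb hxL).symm
  exact hmem

variable [Fintype α]

theorem numCycles_one : (1 : Perm α).numCycles = Fintype.card α := by
  rw [numCycles, fixedFunctions_one, finrank_top, finrank_fintype_fun_eq_card]

theorem numCycles_add_numCycles_le (σ τ : Perm α) :
    σ.numCycles + τ.numCycles ≤ (σ * τ).numCycles + Fintype.card α := by
  have hdim := Submodule.finrank_sup_add_finrank_inf_eq σ.fixedFunctions τ.fixedFunctions
  have hsup : finrank ℚ ↥(σ.fixedFunctions ⊔ τ.fixedFunctions) ≤ Fintype.card α :=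
    (Submodule.finrank_le _).trans_eq (finrank_fintype_fun_eq_card ℚ)
  have hinf := Submodule.finrank_mono (fixedFunctions_inf_le_mul σ τ)
  unfold numCycles
  omega

variable [DecidableEq α]

theorem card_le_numCycles_swap_add_one (a b : α) :
    Fintype.card α ≤ (swap a b).numCycles + 1 := by
  let φ : (α → ℚ) →ₗ[ℚ] ℚ :=
    LinearMap.proj (R := ℚ) (φ := fun _ : α => ℚ) a - LinearMap.proj b
  have hker : LinearMap.ker φ ≤ (swap a b).fixedFunctions := by
    intro v hv x
    have hab : v a = v b := sub_eq_zero.mp hv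
    rcases eq_or_ne x a with rfl | hxa
    · rw [swap_apply_left, hab]
    rcases eq_or_ne x b with rfl | hxb
    · rw [swap_apply_right, hab]
    · rw [swap_apply_of_ne_of_ne hxa hxb]
  have hrank := LinearMap.finrank_range_add_finrank_ker φ
  have hrange : finrank ℚ (LinearMap.range φ) ≤ 1 :=
    (Submodule.finrank_le _).trans_eq (finrank_self ℚ)
  have hkerdim := Submodule.finrank_mono hker
  rw [finrank_fintype_fun_eq_card] at hrank
  unfold numCycles
  omega

theorem numCycles_mul_swap_le (σ : Perm α) (a b : α) :
    (σ * swap a b).numCycles ≤ σ.numCycles + 1 := by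
  have h := numCycles_add_numCycles_le (σ * swap a b) (swap a b)
  rw [mul_assoc, swap_mul_self, mul_one] at h
  have := card_le_numCycles_swap_add_one a b
  omega

/-- The indicator of `b` is invariant under `σ` but not under `σ * swap a b`. -/
theorem numCycles_mul_swap_lt (σ : Perm α) {a b : α} (hab : a ≠ b) (hb : σ b = b) :
    (σ * swap a b).numCycles < σ.numCycles := by
  refine Submodule.finrank_lt_finrank_of_lt (SetLike.lt_iff_le_and_exists.mpr ⟨?_, ?_⟩)
  · intro v hv x
    have hva : v b = v a := by simpa [hb] using hv a
    have hvb : v (σ a) = v b := by simpa using hv b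
    rcases eq_or_ne x a with rfl | hxa
    · rw [hvb, hva]
    rcases eq_or_ne x b with rfl | hxb
    · rw [hb]
    · simpa [swap_apply_of_ne_of_ne hxa hxb] using hv x
  · refine ⟨Pi.single b 1, fun x => ?_, fun hv => ?_⟩
    · simp only [Pi.single_apply, σ.injective.eq_iff' hb]
    · simpa [hb, hab] using hv a

theorem numCycles_prod_swap_add_two_mul_card_le (p : α) {L : List α} (hpL : p ∉ L) :
    (L.map (swap p)).prod.numCycles + 2 * L.toFinset.card ≤ L.length + Fintype.card α := by
  induction L using List.reverseRecOn with
  | nil => simp [numCycles_one]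
  | append_singleton M b ih =>
    have hbp : p ≠ b := fun h => hpL (by simp [h])
    have ihM := ih fun h => hpL (List.mem_append_left _ h)
    simp only [List.map_append, List.map_singleton, List.prod_append, List.prod_singleton,
      List.toFinset_append, List.length_append, List.length_singleton]
    by_cases hbM : b ∈ M
    · have hcard : (M.toFinset ∪ [b].toFinset).card = M.toFinset.card := by
        simp [List.mem_toFinset.mpr hbM]
      have := numCycles_mul_swap_le (M.map (swap p)).prod p b
      omega
    · have hcard : (M.toFinset ∪ [b].toFinset).card = M.toFinset.card + 1 := by
        simp [hbM]
      have := numCycles_mul_swap_lt _ hbp (prod_map_swap_apply_of_notMem p hbp.symm hbM)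
      omega

theorem card_parts_partition_le_numCycles (σ : Perm α) :
    Multiset.card σ.partition.parts ≤ σ.numCycles := by
  let s : σ.cycleFactorsFinset ⊕ Function.fixedPoints σ → Set α :=
    Sum.elim (fun c => (c : Perm α).support) fun x => {(x : α)}
  have hdisj : Pairwise (Function.onFun _root_.Disjoint s) := by
    rintro (c | x) (d | y) hne
    · exact Finset.disjoint_coe.mpr (cycleFactorsFinset_pairwise_disjoint σ c.2 d.2
        fun h => hne (congrArg Sum.inl (Subtype.ext h))).disjoint_support
    · exact Set.disjoint_singleton_right.mpr fun hy =>
        notMem_support.mpr y.2 (mem_cycleFactorsFinset_support_le c.2 hy)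
    · exact Set.disjoint_singleton_left.mpr fun hx =>
        notMem_support.mpr x.2 (mem_cycleFactorsFinset_support_le d.2 hx)
    · exact Set.disjoint_singleton.mpr fun h => hne (congrArg Sum.inr (Subtype.ext h))
  have hne : ∀ i, (s i).Nonempty := by
    rintro (c | x)
    · exact Finset.coe_nonempty.mpr ((mem_cycleFactorsFinset_iff.mp c.2).1.nonempty_support)
    · exact Set.singleton_nonempty _
  have hinv : ∀ i x, σ x ∈ s i ↔ x ∈ s i := by
    rintro (c | y) x
    · exact mem_cycleFactorsFinset_support c.2 x
    · exact σ.injective.eq_iff' y.2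
  have hcard : Multiset.card σ.partition.parts =
      Fintype.card (σ.cycleFactorsFinset ⊕ Function.fixedPoints σ) := by
    rw [Fintype.card_sum, Fintype.card_coe, card_fixedPoints, sum_cycleType, parts_partition,
      Multiset.card_add, Multiset.card_replicate, cycleType_def, Multiset.card_map]
    rfl
  rw [hcard, ← finrank_span_eq_card (linearIndependent_indicator_one (K := ℚ) hdisj hne)]
  exact Submodule.finrank_mono (Submodule.span_le.mpr
    (Set.range_subset_iff.mpr fun i => indicator_one_mem_fixedFunctions (hinv i)))

end FixedFunctions

variable {α : Type*} [DecidableEq α]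

theorem mem_range_of_closure_swap_transitive {ι : Type*} {p b : α} (a : ι → α) (hbp : b ≠ p)
    (htrans : ∀ x y : α, ∃ g ∈ Subgroup.closure (Set.range fun i => swap p (a i)), g x = y) :
    b ∈ Set.range a := by
  by_contra hb
  have hfix : Subgroup.closure (Set.range fun i => swap p (a i)) ≤
      MulAction.stabilizer (Perm α) b :=
    (Subgroup.closure_le _).mpr <| Set.range_subset_iff.mpr fun i =>
      swap_apply_of_ne_of_ne hbp fun h => hb ⟨i, h.symm⟩
  obtain ⟨g, hg, hgb⟩ := htrans b p
  exact hbp ((hfix hg).symm.trans hgb)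

theorem sign_eq_neg_one_pow_card_add_card_parts [Fintype α] (σ : Perm α) :
    sign σ = (-1) ^ (Fintype.card α + Multiset.card σ.partition.parts) := by
  obtain ⟨k, hk⟩ := Nat.exists_eq_add_of_le σ.support.card_le_univ
  rw [sign_of_cycleType, parts_partition, Multiset.card_add, Multiset.card_replicate,
    sum_cycleType, hk, Nat.add_sub_cancel_left,
    show σ.support.card + k + (Multiset.card σ.cycleType + k) =
      σ.support.card + Multiset.card σ.cycleType + 2 * k by ring,
    pow_add _ (_ + _) (2 * k), pow_mul, neg_one_sq, one_pow, mul_one, pow_add]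

end Equiv.Perm

open Equiv Equiv.Perm

theorem fullCycleType_eq_parts_partition {n : ℕ} (σ : Perm (Fin n)) :
    fullCycleType σ = σ.partition.parts := by
  rw [fullCycleType, parts_partition, Fintype.card_fin]

/-- if `σ ∈ K_α` (with `α ⊢ n` having `m` parts) admits a transitive
ordered factorization into `r` star transpositions with pivot `n`, then
`r = n + m - 2 + 2g` for some `g ≥ 0`. -/
theorem starFact_genus (n m r : ℕ) (hn : 1 ≤ n) (hm : 1 ≤ m)
    (α : Fin m → ℕ)
    (σ : Equiv.Perm (Fin n)) (hσ : fullCycleType σ = ↑(List.ofFn α))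
    (τ : Fin r → Equiv.Perm (Fin n))
    (hstar : ∀ t, ∃ a : Fin n, a ≠ (⟨n - 1, by omega⟩ : Fin n) ∧
      τ t = Equiv.swap ⟨n - 1, by omega⟩ a)
    (hprod : (List.ofFn τ).prod = σ)
    (htrans : ∀ x y : Fin n, ∃ g ∈ Subgroup.closure (Set.range τ), g x = y) :
    ∃ g : ℕ, r = n + m - 2 + 2 * g := by
  set p : Fin n := ⟨n - 1, by omega⟩
  choose a hap hτ using hstar
  obtain rfl : τ = fun t => swap p (a t) := funext hτ
  have hparts : Multiset.card σ.partition.parts = m := by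
    rw [← fullCycleType_eq_parts_partition, hσ, Multiset.coe_card, List.length_ofFn]
  have hletters : n - 1 ≤ (List.ofFn a).toFinset.card := by
    calc n - 1 = (Finset.univ.erase p).card := by simp
      _ ≤ _ := Finset.card_le_card fun b hb => by
        simpa [List.mem_ofFn'] using
          mem_range_of_closure_swap_transitive a (Finset.ne_of_mem_erase hb) htrans
  have hbound := numCycles_prod_swap_add_two_mul_card_le p (L := List.ofFn a)
    (by simpa [List.mem_ofFn'] using hap)
  rw [List.map_ofFn, Function.comp_def, hprod, List.length_ofFn, Fintype.card_fin] at hbound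
  have hcycles := card_parts_partition_le_numCycles σ
  have hsign : (-1 : ℤˣ) ^ r = (-1) ^ (n + m) := by
    have hσsign := sign_eq_neg_one_pow_card_add_card_parts σ
    rw [hparts, Fintype.card_fin, ← hprod, sign_prod_list_swap, List.length_ofFn] at hσsign
    · exact hσsign
    · simpa [List.mem_ofFn'] using fun t => ⟨p, a t, (hap t).symm, rfl⟩
  have hparity : Even (r + (n + m)) := by
    rw [← neg_one_pow_eq_one_iff_even (by decide : (-1 : ℤˣ) ≠ 1), pow_add, hsign, ← sq,
      Int.units_sq]
  obtain ⟨k, hk⟩ := hparity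
  exact ⟨(r + 2 - (n + m)) / 2, by omega⟩
end

section
/- Let g ≥ 0 and let α be a partition of n with m parts. Then a_g(α) = b_g(α ∪ 1^{n−1}) / (n! (2n−1)^{n+m−3+2g}), where α ∪ 1^{n−1} is the partition of 2n−1 with m+n−1 parts obtained from α by adjoining n−1 parts equal to 1, and b is computed for partitions of 2n−1. -/
open scoped Classical

/-! Adjoining `n - 1` parts equal to `1` to a partition `α` of `n` raises every power sum by
`n - 1 = p₁(α) - 1`, which turns `q̂ᵢ` of the augmented partition into `qᵢ(α)`, hence
`Q̂_g(α ∪ 1^{n-1}) = Q_g(α)`. The parts equal to `1` do not change the product of the parts, and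
the remaining factors of `b_g(α ∪ 1^{n-1})` match those of `a_g(α)` once the augmented partition
is seen to have size `2n - 1` and `n + m - 1` parts. -/

lemma pPow_add_replicate_one (i k : ℕ) (α : Multiset ℕ) :
    pPow i (α + Multiset.replicate k 1) = pPow i α + k := by
  simp [pPow, Multiset.map_replicate]

lemma pPow_one (α : Multiset ℕ) : pPow 1 α = α.sum := by
  simp [pPow]

lemma qhatPow_add_replicate_one {k : ℕ} {α : Multiset ℕ} (hk : k + 1 = α.sum) (i : ℕ) :
    qhatPow i (α + Multiset.replicate k 1) = qPow i α := by
  have hk' : (k : ℚ) = pPow 1 α - 1 := by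
    rw [pPow_one, ← hk]
    push_cast
    ring
  rw [qhatPow, qPow, pPow_add_replicate_one, hk']
  ring

lemma Qhatser_add_replicate_one (g : ℕ) {k : ℕ} {α : Multiset ℕ} (hk : k + 1 = α.sum) :
    Qhatser g (α + Multiset.replicate k 1) = Qser g α := by
  simp only [Qhatser, Qser, qhatPow_add_replicate_one hk]

lemma prod_cast_add_replicate_one (k : ℕ) (α : Multiset ℕ) :
    ((α + Multiset.replicate k 1).map fun a => (a : ℚ)).prod = (α.map fun a => (a : ℚ)).prod := by
  simp [Multiset.map_replicate]

theorem aStar_eq_bHur_augmented_general (g n m : ℕ) (hn : 1 ≤ n)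
    (α : Multiset ℕ)
    (hsum : α.sum = n) (hcard : Multiset.card α = m) :
    aStar g α =
      bHur g (α + Multiset.replicate (n - 1) 1) /
        ((n.factorial : ℚ) * ((2 * n - 1 : ℕ) : ℚ) ^ ((n : ℤ) + m - 3 + 2 * g)) := by
  have hk : n - 1 + 1 = α.sum := by omega
  have hsum' : (α + Multiset.replicate (n - 1) 1).sum = 2 * n - 1 := by
    simp only [Multiset.sum_add, Multiset.sum_replicate, smul_eq_mul, mul_one]
    omega
  have hcard' : Multiset.card (α + Multiset.replicate (n - 1) 1) = m + (n - 1) := by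
    simp [hcard]
  have hfac : m + (n - 1) - 1 + 2 * g = n + m - 2 + 2 * g := by omega
  have hexp : ((m + (n - 1) : ℕ) : ℤ) - 2 + 2 * g = (n : ℤ) + m - 3 + 2 * g := by
    push_cast [hn]
    ring
  have hpow : ((2 * n - 1 : ℕ) : ℚ) ^ ((n : ℤ) + m - 3 + 2 * g) ≠ 0 :=
    zpow_ne_zero _ (by exact_mod_cast (by omega : 2 * n - 1 ≠ 0))
  have hnf : (n.factorial : ℚ) ≠ 0 := by exact_mod_cast n.factorial_ne_zero
  rw [aStar, bHur, Qhatser_add_replicate_one g hk, prod_cast_add_replicate_one, hsum', hcard',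
    hfac, hexp, hsum, hcard]
  field_simp

/-- `a_g(α) = b_g(α ∪ 1^{n-1}) / (n! (2n-1)^{n+m-3+2g})` for `α` a
partition of `n` with `m` parts. -/
theorem aStar_eq_bHur_augmented (g n m : ℕ) (hn : 1 ≤ n)
    (α : Multiset ℕ) (hpos : ∀ a ∈ α, 0 < a)
    (hsum : α.sum = n) (hcard : Multiset.card α = m) :
    aStar g α =
      bHur g (α + Multiset.replicate (n - 1) 1) /
        ((n.factorial : ℚ) * ((2 * n - 1 : ℕ) : ℚ) ^ ((n : ℤ) + m - 3 + 2 * g)) :=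
  aStar_eq_bHur_augmented_general g n m hn α hsum hcard
end

section
/- For all integers n ≥ 1 and h ≥ 0, the coefficient of x^{2h} in the formal power series ξ(x)^{n−1} over ℚ equals (1/(n−1+2h)!) Σ_{j=0}^{n−1} C(n−1, j) (−1)^j ((n−1)/2 − j)^{n−1+2h}, where C(·,·) denotes a binomial coefficient. -/
open scoped Classical

/-! Since `x ξ(x) = e^{x/2} - e^{-x/2}`, the coefficient of `x^{2h}` in `ξ(x)^{n-1}` is that of
`x^{n-1+2h}` in `(e^{x/2} - e^{-x/2})^{n-1} = Σ_j C(n-1,j) (-1)^j e^{((n-1)/2 - j) x}`, and the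
coefficient of `x^N` in `e^{c x}` is `c^N / N!`. -/

open PowerSeries

section RescaleExp

variable {A : Type*} [CommRing A] [Algebra ℚ A]

theorem rescale_exp_pow (a : A) (k : ℕ) :
    rescale a (exp A) ^ k = rescale (k * a) (exp A) := by
  rw [← map_pow, exp_pow_eq_rescale_exp, rescale_rescale]

theorem rescale_exp_sub_rescale_exp_pow (a b : A) (m : ℕ) :
    (rescale a (exp A) - rescale b (exp A)) ^ m =
      ∑ j ∈ Finset.range (m + 1),
        C ((-1) ^ j * m.choose j : A) * rescale (j * b + (m - j : ℕ) * a) (exp A) := by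
  rw [sub_eq_neg_add, add_pow]
  refine Finset.sum_congr rfl fun j _ => ?_
  rw [neg_pow, rescale_exp_pow, rescale_exp_pow, ← exp_mul_exp_eq_exp_add, map_mul, map_pow,
    map_neg, map_one, map_natCast]
  ring

end RescaleExp

theorem coeff_rescale_exp (a : ℚ) (N : ℕ) :
    coeff N (rescale a (exp ℚ)) = a ^ N / N.factorial := by
  rw [coeff_rescale, coeff_exp, Algebra.algebraMap_self, RingHom.id_apply, mul_one_div]

theorem xiSeries_mul_X :
    xiSeries * X = rescale (1 / 2 : ℚ) (exp ℚ) - rescale (-1 / 2 : ℚ) (exp ℚ) := by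
  ext (_ | k)
  · rw [coeff_zero_mul_X, map_sub, coeff_rescale_exp, coeff_rescale_exp]
    norm_num
  · rw [coeff_succ_mul_X, map_sub, coeff_rescale_exp, coeff_rescale_exp, xiSeries, coeff_mk]
    rcases Nat.even_or_odd' k with ⟨i, rfl | rfl⟩
    · have half_pow : (1 / 2 : ℚ) ^ (2 * i + 1) = (4 ^ i)⁻¹ / 2 := by
        rw [one_div, inv_pow, pow_succ, pow_mul]
        norm_num
        ring
      rw [if_pos (even_two_mul i), Nat.mul_div_cancel_left i two_pos, neg_div,
        Odd.neg_pow (odd_two_mul_add_one i), half_pow]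
      field_simp
      ring
    · rw [if_neg (Nat.not_even_iff_odd.mpr (odd_two_mul_add_one i)), neg_div,
        Even.neg_pow ⟨i + 1, by ring⟩, sub_self]

/-- the coefficient of `x^{2h}` in `ξ(x)^{n-1}` equals
`(1/(n-1+2h)!) Σ_{j=0}^{n-1} C(n-1,j) (-1)^j ((n-1)/2 - j)^{n-1+2h}`. -/
theorem coeff_xi_pow (n h : ℕ) (hn : 1 ≤ n) :
    PowerSeries.coeff (2 * h) (xiSeries ^ (n - 1)) =
      (1 / ((n - 1 + 2 * h).factorial : ℚ)) *
        ∑ j ∈ Finset.range n, ((n - 1).choose j : ℚ) * (-1) ^ j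
          * (((n : ℚ) - 1) / 2 - (j : ℚ)) ^ (n - 1 + 2 * h) := by
  obtain ⟨m, rfl⟩ := Nat.exists_eq_add_of_le' hn
  have hshift : coeff (2 * h) (xiSeries ^ m) = coeff (m + 2 * h) ((xiSeries * X) ^ m) := by
    rw [mul_pow, add_comm, coeff_mul_X_pow]
  rw [Nat.add_sub_cancel, hshift, xiSeries_mul_X, rescale_exp_sub_rescale_exp_pow, map_sum,
    Finset.mul_sum]
  refine Finset.sum_congr rfl fun j hj => ?_
  have hexponent :
      (j : ℚ) * (-1 / 2) + ((m - j : ℕ) : ℚ) * (1 / 2) = ((m + 1 : ℕ) - 1) / 2 - j := by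
    rw [Nat.cast_sub (Finset.mem_range_succ_iff.mp hj)]
    push_cast
    ring
  rw [coeff_C_mul, coeff_rescale_exp, hexponent]
  ring
end
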